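/- Let E be a two-type unbalanced non-trivial linear economy with atom A1 of type one (utility vector a1, endowment ω1) and type-two consumers T \ A1 (utility vector a2, endowment ω2). Let (x*_1, x*_2) maximize a1·x1 over the set X = {(x1, x2) ∈ ℝ^l_+ × ℝ^l_+ : μ(A1)x1 + μ(T \ A1)x2 ≤ μ(A1)ω1 + μ(T \ A1)ω2 componentwise, a2·x2 = a2·ω2}. Then the allocation x* defined by x*(t) = x*_1 for t ∈ A1 and x*(t) = x*_2 for t ∈ T \ A1 belongs to the core C(E). -/

import Mathlib

open MeasureTheory
open scoped Classical
set_option linter.unusedSectionVars false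

noncomputable section

/-- Dot product of two vectors in `ℝ^l`. -/
def dotp {l : ℕ} (a x : Fin l → ℝ) : ℝ := ∑ i, a i * x i

/-- An allocation: an integrable function into the nonnegative orthant. -/
def IsAllocation {T : Type*} [MeasurableSpace T] {l : ℕ} (μ : Measure T)
    (x : T → Fin l → ℝ) : Prop :=
  Integrable x μ ∧ ∀ t, 0 ≤ x t

/-- Initial endowment in a two-type economy: `ω1` for consumers in `A1`, `ω2` otherwise. -/
def endow {T : Type*} {l : ℕ} (A1 : Set T) (ω1 ω2 : Fin l → ℝ) (t : T) : Fin l → ℝ :=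
  if t ∈ A1 then ω1 else ω2

/-- Utility vectors in a two-type linear economy: `a1` for consumers in `A1`, `a2` otherwise. -/
def util {T : Type*} {l : ℕ} (A1 : Set T) (a1 a2 : Fin l → ℝ) (t : T) : Fin l → ℝ :=
  if t ∈ A1 then a1 else a2

/-- A feasible allocation. -/
def Feasible {T : Type*} [MeasurableSpace T] {l : ℕ} (μ : Measure T)
    (A1 : Set T) (ω1 ω2 : Fin l → ℝ) (x : T → Fin l → ℝ) : Prop :=
  (∫ t, x t ∂μ) = ∫ t, endow A1 ω1 ω2 t ∂μ

/-- Coalition `S` blocks the allocation `x` in the two-type linear economy. -/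
def Blocks {T : Type*} [MeasurableSpace T] {l : ℕ} (μ : Measure T)
    (A1 : Set T) (a1 a2 ω1 ω2 : Fin l → ℝ) (S : Set T) (x : T → Fin l → ℝ) : Prop :=
  MeasurableSet S ∧ 0 < μ S ∧ ∃ y : T → Fin l → ℝ, IsAllocation μ y ∧
    (∫ t in S, y t ∂μ) = (∫ t in S, endow A1 ω1 ω2 t ∂μ) ∧
    ∀ t ∈ S, dotp (util A1 a1 a2 t) (x t) < dotp (util A1 a1 a2 t) (y t)

/-- Membership in the core `C(E)`: feasible and blocked by no coalition. -/
def InCore {T : Type*} [MeasurableSpace T] {l : ℕ} (μ : Measure T)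
    (A1 : Set T) (a1 a2 ω1 ω2 : Fin l → ℝ) (x : T → Fin l → ℝ) : Prop :=
  IsAllocation μ x ∧ Feasible μ A1 ω1 ω2 x ∧
    ∀ S : Set T, ¬ Blocks μ A1 a1 a2 ω1 ω2 S x

/-- `(p, x)` is a competitive equilibrium of the two-type linear economy. -/
def IsCompEquil {T : Type*} [MeasurableSpace T] {l : ℕ} (μ : Measure T)
    (A1 : Set T) (a1 a2 ω1 ω2 : Fin l → ℝ) (p : Fin l → ℝ) (x : T → Fin l → ℝ) : Prop :=
  0 ≤ p ∧ IsAllocation μ x ∧ Feasible μ A1 ω1 ω2 x ∧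
    ∀ᵐ t ∂μ, dotp p (x t) ≤ dotp p (endow A1 ω1 ω2 t) ∧
      ∀ y : Fin l → ℝ, 0 ≤ y →
        dotp (util A1 a1 a2 t) (x t) < dotp (util A1 a1 a2 t) y →
        dotp p (endow A1 ω1 ω2 t) < dotp p y

/-- `x` is a competitive allocation, i.e. belongs to `W(E)`. -/
def InW {T : Type*} [MeasurableSpace T] {l : ℕ} (μ : Measure T)
    (A1 : Set T) (a1 a2 ω1 ω2 : Fin l → ℝ) (x : T → Fin l → ℝ) : Prop :=
  ∃ p : Fin l → ℝ, IsCompEquil μ A1 a1 a2 ω1 ω2 p x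

/-- Non-triviality: the initial allocation is not Pareto optimal, i.e. there is a
feasible allocation strictly preferred by every consumer. -/
def NonTrivial {T : Type*} [MeasurableSpace T] {l : ℕ} (μ : Measure T)
    (A1 : Set T) (a1 a2 ω1 ω2 : Fin l → ℝ) : Prop :=
  ∃ y : T → Fin l → ℝ, IsAllocation μ y ∧ Feasible μ A1 ω1 ω2 y ∧
    ∀ t, dotp (util A1 a1 a2 t) (endow A1 ω1 ω2 t) < dotp (util A1 a1 a2 t) (y t)


section Helpers

variable {T : Type*} [MeasurableSpace T] {μ : Measure T} {l : ℕ}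
  {A1 : Set T} {c1 c2 : Fin l → ℝ}

lemma dotp_add (a x y : Fin l → ℝ) : dotp a (x + y) = dotp a x + dotp a y := by
  simp [dotp, mul_add, Finset.sum_add_distrib]

lemma dotp_smul (a : Fin l → ℝ) (k : ℝ) (x : Fin l → ℝ) : dotp a (k • x) = k * dotp a x := by
  simp only [dotp, Pi.smul_apply, smul_eq_mul, Finset.mul_sum]
  exact Finset.sum_congr rfl fun i _ => by ring

lemma dotp_zero (a : Fin l → ℝ) : dotp a (0 : Fin l → ℝ) = 0 := by simp [dotp]

lemma dotp_nonneg {a x : Fin l → ℝ} (ha : ∀ i, 0 < a i) (hx : 0 ≤ x) : 0 ≤ dotp a x :=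
  Finset.sum_nonneg fun i _ => mul_nonneg (ha i).le (hx i)

lemma dotp_eq_zero_iff {a x : Fin l → ℝ} (ha : ∀ i, 0 < a i) (hx : 0 ≤ x)
    (h : dotp a x = 0) : x = 0 := by
  funext i
  have := (Finset.sum_eq_zero_iff_of_nonneg
    (fun j _ => mul_nonneg (ha j).le (hx j))).1 h i (Finset.mem_univ i)
  have hai := (ha i).ne'
  simpa [hai] using this

lemma dotp_comp_integrable (a : Fin l → ℝ) {f : T → Fin l → ℝ} (hf : Integrable f μ) :
    Integrable (fun t => dotp a (f t)) μ := by
  have : (fun t => dotp a (f t)) = fun t => ∑ i, a i * f t i := rfl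
  rw [this]
  refine integrable_finset_sum _ fun i _ => ?_
  exact ((ContinuousLinearMap.proj (R := ℝ) (φ := fun _ : Fin l => ℝ) i).integrable_comp
    hf).const_mul _

lemma dotp_integral (a : Fin l → ℝ) {f : T → Fin l → ℝ} (hf : Integrable f μ) :
    dotp a (∫ t, f t ∂μ) = ∫ t, dotp a (f t) ∂μ := by
  have hcomp : ∀ i : Fin l, Integrable (fun t => f t i) μ := fun i =>
    (ContinuousLinearMap.proj (R := ℝ) (φ := fun _ : Fin l => ℝ) i).integrable_comp hf
  have happ : ∀ i : Fin l, (∫ t, f t ∂μ) i = ∫ t, f t i ∂μ := fun i =>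
    ((ContinuousLinearMap.proj (R := ℝ) (φ := fun _ : Fin l => ℝ) i).integral_comp_comm hf).symm
  unfold dotp
  rw [integral_finset_sum]
  · exact Finset.sum_congr rfl fun i _ => by rw [happ, integral_const_mul]
  · exact fun i _ => (hcomp i).const_mul _

lemma setIntegral_gt_const {f : T → ℝ} {s : Set T} (hs : MeasurableSet s)
    (hμs : μ s ≠ ⊤) (hμ : 0 < μ s)
    (hf : IntegrableOn f s μ) {c : ℝ} (h : ∀ t ∈ s, c < f t) :
    (μ s).toReal * c < ∫ t in s, f t ∂μ := by
  have hc : IntegrableOn (fun _ : T => c) s μ := integrableOn_const hμs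
  have hg : IntegrableOn (fun t => f t - c) s μ := hf.sub hc
  have hpos : 0 < ∫ t in s, (f t - c) ∂μ := by
    rw [setIntegral_pos_iff_support_of_nonneg_ae _ hg]
    · refine lt_of_lt_of_le hμ (measure_mono ?_)
      exact fun t ht => ⟨(sub_pos.2 (h t ht)).ne', ht⟩
    · filter_upwards [ae_restrict_mem hs] with t ht
      simp only [Pi.zero_apply, sub_nonneg]
      exact (h t ht).le
  have heq : ∫ t in s, (f t - c) ∂μ = (∫ t in s, f t ∂μ) - (μ s).toReal * c := by
    rw [integral_sub hf hc, setIntegral_const, smul_eq_mul, measureReal_def]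
  linarith [heq ▸ hpos]

lemma setIntegral_comp_nonneg {f : T → Fin l → ℝ} {s : Set T} (hf : ∀ t, 0 ≤ f t)
    (hint : Integrable f μ) (i : Fin l) : 0 ≤ (∫ t in s, f t ∂μ) i := by
  have happ : (∫ t in s, f t ∂μ) i = ∫ t in s, f t i ∂μ :=
    ((ContinuousLinearMap.proj (R := ℝ) (φ := fun _ : Fin l => ℝ) i).integral_comp_comm
      hint.restrict).symm
  rw [happ]
  exact integral_nonneg fun t => hf t i

lemma endow_eq_sum : endow A1 c1 c2 = fun t =>
    A1.indicator (fun _ => c1) t + A1ᶜ.indicator (fun _ => c2) t := by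
  funext t
  by_cases ht : t ∈ A1 <;> simp [endow, ht]

lemma endow_integrable [IsFiniteMeasure μ] (hA1 : MeasurableSet A1) :
    Integrable (endow A1 c1 c2) μ := by
  rw [endow_eq_sum]
  exact ((integrable_const c1).indicator hA1).add ((integrable_const c2).indicator hA1.compl)

lemma setIntegral_split (hA1 : MeasurableSet A1) {s : Set T} (hs : MeasurableSet s)
    {f : T → Fin l → ℝ} (hf : Integrable f μ) :
    ∫ t in s, f t ∂μ = (∫ t in s ∩ A1, f t ∂μ) + ∫ t in s ∩ A1ᶜ, f t ∂μ := by
  have hdisj : Disjoint (s ∩ A1) (s ∩ A1ᶜ) :=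
    disjoint_compl_right.mono inf_le_right inf_le_right
  have hsplit : s = (s ∩ A1) ∪ (s ∩ A1ᶜ) := by
    rw [← Set.inter_union_distrib_left, Set.union_compl_self, Set.inter_univ]
  calc ∫ t in s, f t ∂μ
      = ∫ t in (s ∩ A1) ∪ (s ∩ A1ᶜ), f t ∂μ := by rw [← hsplit]
    _ = _ := setIntegral_union hdisj (hs.inter hA1.compl) hf.integrableOn hf.integrableOn

lemma setIntegral_endow [IsFiniteMeasure μ] (hA1 : MeasurableSet A1) {s : Set T}
    (hs : MeasurableSet s) :
    ∫ t in s, endow A1 c1 c2 t ∂μ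
      = (μ (s ∩ A1)).toReal • c1 + (μ (s ∩ A1ᶜ)).toReal • c2 := by
  rw [setIntegral_split hA1 hs (endow_integrable hA1)]
  have h1 : ∫ t in s ∩ A1, endow A1 c1 c2 t ∂μ = (μ (s ∩ A1)).toReal • c1 := by
    rw [setIntegral_congr_fun (hs.inter hA1) (g := fun _ => c1)
      (fun t ht => by simp [endow, ht.2]), setIntegral_const, measureReal_def]
  have h2 : ∫ t in s ∩ A1ᶜ, endow A1 c1 c2 t ∂μ = (μ (s ∩ A1ᶜ)).toReal • c2 := by
    rw [setIntegral_congr_fun (hs.inter hA1.compl) (g := fun _ => c2)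
      (fun t ht => by simp [endow, (Set.mem_compl_iff A1 t).1 ht.2]), setIntegral_const, measureReal_def]
  rw [h1, h2]

lemma integral_endow [IsFiniteMeasure μ] (hA1 : MeasurableSet A1) :
    ∫ t, endow A1 c1 c2 t ∂μ = (μ A1).toReal • c1 + (μ A1ᶜ).toReal • c2 := by
  rw [← setIntegral_univ, setIntegral_endow hA1 MeasurableSet.univ,
    Set.univ_inter, Set.univ_inter]

end Helpers

/-- In a two-type unbalanced non-trivial linear economy, the allocation
assigning `x*₁` to the atom `A1` and `x*₂` to the type-two consumers, where `(x*₁, x*₂)`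
maximizes `a1·x₁` over `X`, belongs to the core. -/
theorem maximizer_allocation_in_core
    {T : Type*} [MeasurableSpace T] (μ : Measure T) [IsFiniteMeasure μ]
    {l : ℕ} (hl : 1 ≤ l)
    (a1 a2 : Fin l → ℝ) (ha1pos : ∀ i, 0 < a1 i) (ha2pos : ∀ i, 0 < a2 i)
    (ha1sum : ∑ i, a1 i = 1) (ha2sum : ∑ i, a2 i = 1) (hne : a1 ≠ a2)
    (A1 : Set T) (hA1meas : MeasurableSet A1) (hA1pos : 0 < μ A1)
    (hA1atom : ∀ B : Set T, MeasurableSet B → B ⊆ A1 → μ B = 0 ∨ μ B = μ A1)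
    (hcompl : 0 < μ A1ᶜ)
    (ω1 ω2 : Fin l → ℝ) (hω1 : 0 ≤ ω1) (hω2 : 0 ≤ ω2)
    (hnontriv : NonTrivial μ A1 a1 a2 ω1 ω2)
    (x1s x2s : Fin l → ℝ) (hx1s : 0 ≤ x1s) (hx2s : 0 ≤ x2s)
    (hfeas : (μ A1).toReal • x1s + (μ A1ᶜ).toReal • x2s ≤
      (μ A1).toReal • ω1 + (μ A1ᶜ).toReal • ω2)
    (hindiff : dotp a2 x2s = dotp a2 ω2)
    (hmax : ∀ x1 x2 : Fin l → ℝ, 0 ≤ x1 → 0 ≤ x2 →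
      (μ A1).toReal • x1 + (μ A1ᶜ).toReal • x2 ≤
        (μ A1).toReal • ω1 + (μ A1ᶜ).toReal • ω2 →
      dotp a2 x2 = dotp a2 ω2 → dotp a1 x1 ≤ dotp a1 x1s) :
    InCore μ A1 a1 a2 ω1 ω2 (endow A1 x1s x2s) := by
  have hαpos : 0 < (μ A1).toReal := ENNReal.toReal_pos hA1pos.ne' (measure_ne_top μ A1)
  have hγpos : 0 < (μ A1ᶜ).toReal := ENNReal.toReal_pos hcompl.ne' (measure_ne_top μ A1ᶜ)
  set αr := (μ A1).toReal with hαr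
  set γr := (μ A1ᶜ).toReal with hγr
  have hEq : αr • x1s + γr • x2s = αr • ω1 + γr • ω2 := by
    set s := (αr • ω1 + γr • ω2) - (αr • x1s + γr • x2s) with hsdef
    have hs0 : (0 : Fin l → ℝ) ≤ s := sub_nonneg.2 hfeas
    have hx1' : (0 : Fin l → ℝ) ≤ x1s + αr⁻¹ • s :=
      add_nonneg hx1s (smul_nonneg (inv_nonneg.2 hαpos.le) hs0)
    have hcon : αr • (x1s + αr⁻¹ • s) + γr • x2s ≤ αr • ω1 + γr • ω2 := by
      rw [smul_add, smul_inv_smul₀ hαpos.ne']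
      refine le_of_eq ?_
      rw [hsdef]; abel
    have hle := hmax _ _ hx1' hx2s hcon hindiff
    rw [dotp_add, dotp_smul] at hle
    have hdnn : 0 ≤ dotp a1 s := dotp_nonneg ha1pos hs0
    have hds : dotp a1 s ≤ 0 := by
      by_contra h
      push_neg at h
      have : 0 < αr⁻¹ * dotp a1 s := mul_pos (inv_pos.2 hαpos) h
      linarith
    have hzero : s = 0 := dotp_eq_zero_iff ha1pos hs0 (le_antisymm hds hdnn)
    have := sub_eq_zero.1 (hsdef ▸ hzero)
    exact this.symm
  refine ⟨⟨endow_integrable hA1meas, fun t => ?_⟩, ?_, ?_⟩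
  · unfold endow
    by_cases ht : t ∈ A1 <;> simp [ht, hx1s, hx2s]
  · unfold Feasible
    rw [integral_endow hA1meas, integral_endow hA1meas]
    exact hEq
  · rintro S ⟨hSmeas, hSpos, y, ⟨hyint, hy0⟩, hybud, hypref⟩
    rcases hA1atom (S ∩ A1) (hSmeas.inter hA1meas) Set.inter_subset_right with hz | hfull
    · -- coalition essentially disjoint from the atom
      have hSsub : S ⊆ (S ∩ A1) ∪ (S ∩ A1ᶜ) := by
        rw [← Set.inter_union_distrib_left, Set.union_compl_self, Set.inter_univ]
      have hpos2 : 0 < μ (S ∩ A1ᶜ) := by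
        rcases eq_or_ne (μ (S ∩ A1ᶜ)) 0 with h0 | h0
        · exfalso
          have : μ S ≤ μ (S ∩ A1) + μ (S ∩ A1ᶜ) :=
            (measure_mono hSsub).trans (measure_union_le _ _)
          rw [hz, h0, add_zero] at this
          exact absurd (le_antisymm this zero_le) hSpos.ne'
        · exact lt_of_le_of_ne zero_le (Ne.symm h0)
      have hpt : ∀ t ∈ S ∩ A1ᶜ, dotp a2 ω2 < dotp a2 (y t) := by
        intro t ht
        have h := hypref t ht.1
        have htn : t ∉ A1 := ht.2
        simp only [util, endow, if_neg htn] at h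
        rwa [hindiff] at h
      have hgt := setIntegral_gt_const (hSmeas.inter hA1meas.compl)
        (measure_ne_top _ _) hpos2 ((dotp_comp_integrable a2 hyint).integrableOn) hpt
      have hI2 : ∫ t in S ∩ A1ᶜ, y t ∂μ = (μ (S ∩ A1ᶜ)).toReal • ω2 := by
        have hsp := setIntegral_split hA1meas hSmeas hyint
        have h0 : (∫ t in S ∩ A1, y t ∂μ) = 0 := by
          rw [Measure.restrict_eq_zero.2 hz, integral_zero_measure]
        rw [hybud, setIntegral_endow hA1meas hSmeas, hz, h0, zero_add] at hsp
        rw [← hsp]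
        simp
      have hdI : dotp a2 (∫ t in S ∩ A1ᶜ, y t ∂μ)
          = (μ (S ∩ A1ᶜ)).toReal * dotp a2 ω2 := by
        rw [hI2, dotp_smul]
      rw [← dotp_integral a2 hyint.restrict, hdI] at hgt
      exact lt_irrefl _ hgt
    · -- coalition contains the atom
      set βr := (μ (S ∩ A1ᶜ)).toReal with hβr
      have hβnn : 0 ≤ βr := ENNReal.toReal_nonneg
      have hβγ : βr ≤ γr :=
        ENNReal.toReal_mono (measure_ne_top μ A1ᶜ) (measure_mono Set.inter_subset_right)
      set I1 := ∫ t in S ∩ A1, y t ∂μ with hI1def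
      set I2 := ∫ t in S ∩ A1ᶜ, y t ∂μ with hI2def
      have hsum : I1 + I2 = αr • ω1 + βr • ω2 := by
        rw [hI1def, hI2def, ← setIntegral_split hA1meas hSmeas hyint, hybud,
          setIntegral_endow hA1meas hSmeas, hfull]
      have hI1n : (0 : Fin l → ℝ) ≤ I1 := fun i => setIntegral_comp_nonneg hy0 hyint i
      have hI2n : (0 : Fin l → ℝ) ≤ I2 := fun i => setIntegral_comp_nonneg hy0 hyint i
      have hpt1 : ∀ t ∈ S ∩ A1, dotp a1 x1s < dotp a1 (y t) := by
        intro t ht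
        have h := hypref t ht.1
        simpa only [util, endow, if_pos ht.2] using h
      have h1 : αr * dotp a1 x1s < dotp a1 I1 := by
        have := setIntegral_gt_const (hSmeas.inter hA1meas) (measure_ne_top _ _)
          (by rw [hfull]; exact hA1pos) ((dotp_comp_integrable a1 hyint).integrableOn) hpt1
        rw [← dotp_integral a1 hyint.restrict, hfull] at this
        exact this
      have hpt2 : ∀ t ∈ S ∩ A1ᶜ, dotp a2 ω2 ≤ dotp a2 (y t) := by
        intro t ht
        have h := hypref t ht.1
        have htn : t ∉ A1 := ht.2
        simp only [util, endow, if_neg htn] at h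
        rw [hindiff] at h
        exact h.le
      have h2 : βr * dotp a2 ω2 ≤ dotp a2 I2 := by
        have hmono := setIntegral_mono_on
          (integrableOn_const (measure_lt_top μ (S ∩ A1ᶜ)).ne)
          ((dotp_comp_integrable a2 hyint).integrableOn)
          (hSmeas.inter hA1meas.compl) hpt2
        rw [setIntegral_const, smul_eq_mul, measureReal_def] at hmono
        rwa [← dotp_integral a2 hyint.restrict] at hmono
      -- construct a candidate for the maximization problem
      set x1 := αr⁻¹ • I1 with hx1def
      have hx1n : (0 : Fin l → ℝ) ≤ x1 := smul_nonneg (inv_nonneg.2 hαpos.le) hI1n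
      have hd1 : dotp a1 x1s < dotp a1 x1 := by
        rw [hx1def, dotp_smul]
        rw [lt_inv_mul_iff₀ hαpos]
        exact h1
      set R := I2 + (γr - βr) • ω2 with hRdef
      have hRn : (0 : Fin l → ℝ) ≤ R :=
        add_nonneg hI2n (smul_nonneg (by linarith) hω2)
      have hkey : αr • x1 + R = αr • ω1 + γr • ω2 := by
        rw [hx1def, smul_inv_smul₀ hαpos.ne', hRdef, ← add_assoc, hsum, sub_smul]
        abel
      set c := dotp a2 ω2 with hcdef
      have hc : 0 ≤ c := dotp_nonneg ha2pos hω2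
      set d := dotp a2 R with hddef
      have hd0 : 0 ≤ d := dotp_nonneg ha2pos hRn
      have hdR : γr * c ≤ d := by
        rw [hddef, hRdef, dotp_add, dotp_smul, ← hcdef]
        nlinarith [h2]
      by_cases hd : d = 0
      · have hc0 : c = 0 := by nlinarith
        have hcon : αr • x1 + γr • (0 : Fin l → ℝ) ≤ αr • ω1 + γr • ω2 := by
          rw [smul_zero, add_zero, ← hkey]
          exact le_add_of_nonneg_right hRn
        have := hmax x1 0 hx1n le_rfl hcon (by rw [dotp_zero]; exact hc0.symm)
        linarith
      · have hdpos : 0 < d := hd0.lt_of_ne (Ne.symm hd)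
        set x2 := (c / d) • R with hx2def
        have hx2n : (0 : Fin l → ℝ) ≤ x2 := smul_nonneg (div_nonneg hc hd0) hRn
        have hk1 : γr * c / d ≤ 1 := (div_le_one hdpos).2 hdR
        have hk0 : 0 ≤ γr * c / d := div_nonneg (mul_nonneg hγpos.le hc) hd0
        have hsmall : γr • x2 ≤ R := by
          intro i
          have hRi : 0 ≤ R i := hRn i
          simp only [hx2def, Pi.smul_apply, smul_eq_mul]
          have : γr * (c / d * R i) = (γr * c / d) * R i := by ring
          rw [this]
          nlinarith
        have hcon : αr • x1 + γr • x2 ≤ αr • ω1 + γr • ω2 := by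
          rw [← hkey]
          exact add_le_add_right hsmall _
        have heq2 : dotp a2 x2 = dotp a2 ω2 := by
          rw [hx2def, dotp_smul, ← hddef, div_mul_cancel₀ _ hd, hcdef]
        have := hmax x1 x2 hx1n hx2n hcon heq2
        linarith
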